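/- arXiv:2502.16574 — 2 statements merged into one kernel-verified Lean document; each statement's English description precedes it below -/
import Mathlib

section
/- Fix y ∈ {0,1} and u ∈ ℝ, and let J = 1{y=0}. The function v ↦ ℓ(u,v;y) is twice differentiable on ℝ, and its second derivative at every v equals J·e^v(1+e^u)/(e^v(1+e^u)+1)² − e^v/(1+e^v)². -/
/-- Single-observation ZIB log-likelihood. -/
noncomputable def zibLL (u v y : ℝ) : ℝ :=
  (if y = 0 then (1 : ℝ) else 0) * Real.log (Real.exp v + (1 + Real.exp u)⁻¹)
    - Real.log (1 + Real.exp v)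
    + (1 - (if y = 0 then (1 : ℝ) else 0)) * (y * u - Real.log (1 + Real.exp u))

private lemma hd1 (c : ℝ) (hc : 0 < c) (v : ℝ) :
    HasDerivAt (fun v => Real.log (Real.exp v + c)) (Real.exp v / (Real.exp v + c)) v := by
  have h := ((Real.hasDerivAt_exp v).add_const c).log (by positivity)
  simpa using h

private lemma hd2 (c : ℝ) (hc : 0 < c) (v : ℝ) :
    HasDerivAt (fun v => Real.exp v / (Real.exp v + c))
      (c * Real.exp v / (Real.exp v + c) ^ 2) v := by
  have hne : Real.exp v + c ≠ 0 := by positivity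
  have h := (Real.hasDerivAt_exp v).div ((Real.hasDerivAt_exp v).add_const c) hne
  exact h.congr_deriv (by ring)

/-- For fixed `y ∈ {0,1}` and `u`, the map `v ↦ ℓ(u,v;y)` is twice differentiable on ℝ
and its second derivative at every `v` equals
`J·e^v(1+e^u)/(e^v(1+e^u)+1)² − e^v/(1+e^v)²`. -/
theorem zibLL_second_deriv_v (y u J : ℝ) (hy : y = 0 ∨ y = 1)
    (hJ : J = if y = 0 then 1 else 0) :
    Differentiable ℝ (fun v => zibLL u v y) ∧
    Differentiable ℝ (deriv (fun v => zibLL u v y)) ∧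
    ∀ v : ℝ, deriv (deriv (fun v' => zibLL u v' y)) v
      = J * Real.exp v * (1 + Real.exp u) / (Real.exp v * (1 + Real.exp u) + 1) ^ 2
        - Real.exp v / (1 + Real.exp v) ^ 2 := by
  set a : ℝ := (1 + Real.exp u)⁻¹ with ha
  have ha0 : 0 < a := by positivity
  have hfeq : (fun v => zibLL u v y)
      = fun v => J * Real.log (Real.exp v + a)
        - Real.log (1 + Real.exp v)
        + (1 - J) * (y * u - Real.log (1 + Real.exp u)) := by
    funext v; simp [zibLL, hJ, ha]
  have hF : ∀ v, HasDerivAt (fun v => zibLL u v y)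
      (J * (Real.exp v / (Real.exp v + a)) - Real.exp v / (1 + Real.exp v)) v := by
    intro v
    rw [hfeq]
    have h1 := (hd1 a ha0 v).const_mul J
    have h2 : HasDerivAt (fun v => Real.log (1 + Real.exp v))
        (Real.exp v / (1 + Real.exp v)) v := by
      have h := ((Real.hasDerivAt_exp v).const_add 1).log (by positivity)
      simpa using h
    exact (h1.sub h2).add_const _
  have hderiv : deriv (fun v => zibLL u v y)
      = fun v => J * (Real.exp v / (Real.exp v + a)) - Real.exp v / (1 + Real.exp v) := by
    funext v; exact (hF v).deriv
  have hG : ∀ v, HasDerivAt (fun v => J * (Real.exp v / (Real.exp v + a))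
        - Real.exp v / (1 + Real.exp v))
      (J * (a * Real.exp v / (Real.exp v + a) ^ 2)
        - 1 * Real.exp v / (Real.exp v + 1) ^ 2) v := by
    intro v
    have h1 := (hd2 a ha0 v).const_mul J
    have h2 := hd2 1 one_pos v
    have h2' : HasDerivAt (fun v => Real.exp v / (1 + Real.exp v))
        (1 * Real.exp v / (Real.exp v + 1) ^ 2) v := by
      simpa [add_comm] using h2
    exact h1.sub h2'
  refine ⟨fun v => (hF v).differentiableAt, ?_, ?_⟩
  · rw [hderiv]; intro v; exact (hG v).differentiableAt
  · intro v
    rw [hderiv, (hG v).deriv]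
    have he : (0:ℝ) < 1 + Real.exp u := by positivity
    have hne : (1 + Real.exp u) ≠ 0 := ne_of_gt he
    have h3 : a * Real.exp v / (Real.exp v + a) ^ 2
        = Real.exp v * (1 + Real.exp u) / (Real.exp v * (1 + Real.exp u) + 1) ^ 2 := by
      rw [ha]
      rw [div_eq_div_iff (by positivity) (by positivity)]
      field_simp
    rw [h3]
    ring_nf
end

section
/- Let n, p, q be positive integers, and let (y_i, x_i, z_i) ∈ {0,1} × ℝ^p × ℝ^q for i = 1,…,n be a data set with J_i = 1{y_i = 0}. Define the sample log-likelihood l_n(β,γ) = Σ_{i=1}^n ℓ(β⋅x_i, γ⋅z_i; y_i). Then l_n is twice continuously differentiable in θ = (β,γ) ∈ ℝ^{p+q}, and its Hessian matrix at θ is the (p+q)×(p+q) block matrix whose β–β block equals Σ_{i=1}^n a_i(θ)·x_i x_iᵀ, whose γ–γ block equals Σ_{i=1}^n b_i(θ)·z_i z_iᵀ, and whose β–γ block equals Σ_{i=1}^n c_i(θ)·x_i z_iᵀ, where, writing u_i = β⋅x_i, v_i = γ⋅z_i: a_i(θ) = −J_i·e^{u_i}·(e^{v_i}(1+e^{u_i})(1−e^{u_i})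 + 1)/((1+e^{u_i})²(e^{v_i}(1+e^{u_i})+1)²) − (1−J_i)·e^{u_i}/(1+e^{u_i})², b_i(θ) = J_i·e^{v_i}(1+e^{u_i})/(e^{v_i}(1+e^{u_i})+1)² − e^{v_i}/(1+e^{v_i})², and c_i(θ) = J_i·e^{u_i+v_i}/(e^{v_i}(1+e^{u_i})+1)². In particular, the Hessian factorizes as −W D(θ) Wᵀ, where W is the (p+q)×(2n) block-diagonal matrix with blocks X = [x_1 ⋯ x_n] and Z = [z_1 ⋯ z_n], and D(θ) is the (2n)×(2n) matrix with diagonal n×n blocks diag(−a_i(θ)), diag(−b_i(θ)) and off-diagonal blocks diag(−c_i(θ)). -/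
section ZIBHelpers

variable {E : Type*} [NormedAddCommGroup E] [NormedSpace ℝ E]

theorem zib_myinv {f : E → ℝ} {f' : E →L[ℝ] ℝ} {x : E} (hf : HasFDerivAt f f' x)
    (h : f x ≠ 0) : HasFDerivAt (fun y => (f y)⁻¹) (-(f x ^ 2)⁻¹ • f') x :=
  (hasDerivAt_inv h).comp_hasFDerivAt x hf

/-- ZIB single-obs log-likelihood, inversion-free form. -/
noncomputable def phiF (Jv yv u v : ℝ) : ℝ :=
  Jv * (Real.log (Real.exp v * (1 + Real.exp u) + 1) - Real.log (1 + Real.exp u))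
    - Real.log (1 + Real.exp v)
    + (1 - Jv) * (yv * u - Real.log (1 + Real.exp u))

noncomputable def AF (Jv yv u v : ℝ) : ℝ :=
  -(Jv * Real.exp u / ((1 + Real.exp u) * (Real.exp v * (1 + Real.exp u) + 1)))
    + (1 - Jv) * (yv - Real.exp u / (1 + Real.exp u))

noncomputable def BF (Jv u v : ℝ) : ℝ :=
  Jv * Real.exp v * (1 + Real.exp u) / (Real.exp v * (1 + Real.exp u) + 1)
    - Real.exp v / (1 + Real.exp v)

noncomputable def aF (Jv u v : ℝ) : ℝ :=
  -Jv * Real.exp u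
      * (Real.exp v * (1 + Real.exp u) * (1 - Real.exp u) + 1)
      / ((1 + Real.exp u) ^ 2 * (Real.exp v * (1 + Real.exp u) + 1) ^ 2)
    - (1 - Jv) * Real.exp u / (1 + Real.exp u) ^ 2

noncomputable def bF (Jv u v : ℝ) : ℝ :=
  Jv * Real.exp v * (1 + Real.exp u) / (Real.exp v * (1 + Real.exp u) + 1) ^ 2
    - Real.exp v / (1 + Real.exp v) ^ 2

noncomputable def cF (Jv u v : ℝ) : ℝ :=
  Jv * Real.exp (u + v) / (Real.exp v * (1 + Real.exp u) + 1) ^ 2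

lemma zib_pos1 (u : ℝ) : (0:ℝ) < 1 + Real.exp u := by positivity
lemma zib_posS (u v : ℝ) : (0:ℝ) < Real.exp v * (1 + Real.exp u) + 1 := by positivity

lemma zibLL_eq_phiF (u v yv : ℝ) :
    zibLL u v yv = phiF (if yv = 0 then 1 else 0) yv u v := by
  unfold zibLL phiF
  have h1 := (zib_pos1 u).ne'
  have h3 := (zib_posS u v).ne'
  have key : Real.exp v + (1 + Real.exp u)⁻¹
      = (Real.exp v * (1 + Real.exp u) + 1) / (1 + Real.exp u) := by
    field_simp
  rw [key, Real.log_div h3 h1]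

theorem zib_hasFDerivAt_phi {U V : E → ℝ} {LU LV : E →L[ℝ] ℝ} {θ : E}
    (hU : HasFDerivAt U LU θ) (hV : HasFDerivAt V LV θ) (Jv yv : ℝ) :
    HasFDerivAt (fun θ => phiF Jv yv (U θ) (V θ))
      (AF Jv yv (U θ) (V θ) • LU + BF Jv (U θ) (V θ) • LV) θ := by
  have hE := hU.exp
  have hF := hV.exp
  have h1E : HasFDerivAt (fun θ => 1 + Real.exp (U θ)) (Real.exp (U θ) • LU) θ := by
    simpa using hE.const_add 1
  have hS : HasFDerivAt (fun θ => Real.exp (V θ) * (1 + Real.exp (U θ)) + 1)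
      (Real.exp (V θ) • (Real.exp (U θ) • LU)
        + (1 + Real.exp (U θ)) • (Real.exp (V θ) • LV)) θ := by
    simpa using (hF.mul h1E).add_const 1
  have hlogS := hS.log (ne_of_gt (zib_posS (U θ) (V θ)))
  have hlog1E := h1E.log (ne_of_gt (zib_pos1 (U θ)))
  have hlog1F : HasFDerivAt (fun θ => Real.log (1 + Real.exp (V θ)))
      ((1 + Real.exp (V θ))⁻¹ • (Real.exp (V θ) • LV)) θ := by
    have : HasFDerivAt (fun θ => 1 + Real.exp (V θ)) (Real.exp (V θ) • LV) θ := by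
      simpa using hF.const_add 1
    exact this.log (ne_of_gt (zib_pos1 (V θ)))
  have hlin : HasFDerivAt (fun θ => yv * U θ - Real.log (1 + Real.exp (U θ)))
      (yv • LU - (1 + Real.exp (U θ))⁻¹ • (Real.exp (U θ) • LU)) θ :=
    (hU.const_mul yv).sub hlog1E
  have H := (((hlogS.sub hlog1E).const_mul Jv).sub hlog1F).add (hlin.const_mul (1 - Jv))
  refine H.congr_fderiv ?_
  ext w
  have h1 := (zib_pos1 (U θ)).ne'
  have h2 := (zib_pos1 (V θ)).ne'
  have h3 := (zib_posS (U θ) (V θ)).ne'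
  simp [AF, BF, ContinuousLinearMap.smul_apply, ContinuousLinearMap.add_apply,
    ContinuousLinearMap.sub_apply, smul_eq_mul]
  field_simp
  ring

theorem zib_hasFDerivAt_A {U V : E → ℝ} {LU LV : E →L[ℝ] ℝ} {θ : E}
    (hU : HasFDerivAt U LU θ) (hV : HasFDerivAt V LV θ) (Jv yv : ℝ) :
    HasFDerivAt (fun θ => AF Jv yv (U θ) (V θ))
      (aF Jv (U θ) (V θ) • LU + cF Jv (U θ) (V θ) • LV) θ := by
  have hE := hU.exp
  have hF := hV.exp
  have h1E : HasFDerivAt (fun θ => 1 + Real.exp (U θ)) (Real.exp (U θ) • LU) θ := by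
    simpa using hE.const_add 1
  have hS : HasFDerivAt (fun θ => Real.exp (V θ) * (1 + Real.exp (U θ)) + 1)
      (Real.exp (V θ) • (Real.exp (U θ) • LU)
        + (1 + Real.exp (U θ)) • (Real.exp (V θ) • LV)) θ := by
    simpa using (hF.mul h1E).add_const 1
  have h1 := (zib_pos1 (U θ)).ne'
  have h3 := (zib_posS (U θ) (V θ)).ne'
  have hden := h1E.mul hS
  have hdenne : (1 + Real.exp (U θ)) * (Real.exp (V θ) * (1 + Real.exp (U θ)) + 1) ≠ 0 :=
    mul_ne_zero h1 h3
  have hg1 := (hE.const_mul Jv).mul (zib_myinv hden hdenne)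
  have hg2 := ((hasFDerivAt_const yv θ).sub (hE.mul (zib_myinv h1E h1))).const_mul (1 - Jv)
  have heq : (fun θ => AF Jv yv (U θ) (V θ)) =
      fun θ => -((Jv * Real.exp (U θ)) *
          ((1 + Real.exp (U θ)) * (Real.exp (V θ) * (1 + Real.exp (U θ)) + 1))⁻¹)
        + (1 - Jv) * (yv - Real.exp (U θ) * (1 + Real.exp (U θ))⁻¹) := by
    funext w
    simp [AF, div_eq_mul_inv, mul_assoc]
  rw [heq]
  have H := hg1.neg.add hg2
  refine H.congr_fderiv ?_
  ext w
  simp [aF, cF, Real.exp_add, ContinuousLinearMap.smul_apply, ContinuousLinearMap.add_apply,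
    ContinuousLinearMap.sub_apply, smul_eq_mul]
  field_simp
  ring

theorem zib_hasFDerivAt_B {U V : E → ℝ} {LU LV : E →L[ℝ] ℝ} {θ : E}
    (hU : HasFDerivAt U LU θ) (hV : HasFDerivAt V LV θ) (Jv : ℝ) :
    HasFDerivAt (fun θ => BF Jv (U θ) (V θ))
      (cF Jv (U θ) (V θ) • LU + bF Jv (U θ) (V θ) • LV) θ := by
  have hE := hU.exp
  have hF := hV.exp
  have h1E : HasFDerivAt (fun θ => 1 + Real.exp (U θ)) (Real.exp (U θ) • LU) θ := by
    simpa using hE.const_add 1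
  have h1F : HasFDerivAt (fun θ => 1 + Real.exp (V θ)) (Real.exp (V θ) • LV) θ := by
    simpa using hF.const_add 1
  have hS : HasFDerivAt (fun θ => Real.exp (V θ) * (1 + Real.exp (U θ)) + 1)
      (Real.exp (V θ) • (Real.exp (U θ) • LU)
        + (1 + Real.exp (U θ)) • (Real.exp (V θ) • LV)) θ := by
    simpa using (hF.mul h1E).add_const 1
  have h1 := (zib_pos1 (U θ)).ne'
  have h2 := (zib_pos1 (V θ)).ne'
  have h3 := (zib_posS (U θ) (V θ)).ne'
  have hg1 := ((hF.const_mul Jv).mul h1E).mul (zib_myinv hS h3)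
  have hg2 := hF.mul (zib_myinv h1F h2)
  have heq : (fun θ => BF Jv (U θ) (V θ)) =
      fun θ => (Jv * Real.exp (V θ)) * (1 + Real.exp (U θ)) *
          (Real.exp (V θ) * (1 + Real.exp (U θ)) + 1)⁻¹
        - Real.exp (V θ) * (1 + Real.exp (V θ))⁻¹ := by
    funext w
    simp [BF, div_eq_mul_inv]
  rw [heq]
  have H := hg1.sub hg2
  refine H.congr_fderiv ?_
  ext w
  simp [bF, cF, Real.exp_add, ContinuousLinearMap.smul_apply, ContinuousLinearMap.add_apply,
    ContinuousLinearMap.sub_apply, smul_eq_mul]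
  field_simp
  ring

theorem zib_contDiff_phi {U V : E → ℝ} (hU : ContDiff ℝ 2 U) (hV : ContDiff ℝ 2 V)
    (Jv yv : ℝ) : ContDiff ℝ 2 (fun θ => phiF Jv yv (U θ) (V θ)) := by
  have hE := hU.exp
  have hF := hV.exp
  have h1E : ContDiff ℝ 2 (fun θ => 1 + Real.exp (U θ)) := contDiff_const.add hE
  have h1F : ContDiff ℝ 2 (fun θ => 1 + Real.exp (V θ)) := contDiff_const.add hF
  have hS : ContDiff ℝ 2 (fun θ => Real.exp (V θ) * (1 + Real.exp (U θ)) + 1) :=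
    (hF.mul h1E).add contDiff_const
  have hlogS := hS.log fun θ => (zib_posS (U θ) (V θ)).ne'
  have hlog1E := h1E.log fun θ => (zib_pos1 (U θ)).ne'
  have hlog1F := h1F.log fun θ => (zib_pos1 (V θ)).ne'
  exact ((contDiff_const.mul (hlogS.sub hlog1E)).sub hlog1F).add
    (contDiff_const.mul ((contDiff_const.mul hU).sub hlog1E))

end ZIBHelpers

section ZIBLinear

variable {n p q : ℕ}

noncomputable def LUmap (x : Fin n → Fin p → ℝ) (q : ℕ) (i : Fin n) :
    ((Fin p ⊕ Fin q) → ℝ) →L[ℝ] ℝ :=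
  ∑ j, x i j • ContinuousLinearMap.proj (R := ℝ) (φ := fun _ : Fin p ⊕ Fin q => ℝ) (Sum.inl j)

noncomputable def LVmap (z : Fin n → Fin q → ℝ) (p : ℕ) (i : Fin n) :
    ((Fin p ⊕ Fin q) → ℝ) →L[ℝ] ℝ :=
  ∑ k, z i k • ContinuousLinearMap.proj (R := ℝ) (φ := fun _ : Fin p ⊕ Fin q => ℝ) (Sum.inr k)

lemma hasFDerivAt_LU (x : Fin n → Fin p → ℝ) (i : Fin n) (θ : (Fin p ⊕ Fin q) → ℝ) :
    HasFDerivAt (fun θ : (Fin p ⊕ Fin q) → ℝ => ∑ j, θ (Sum.inl j) * x i j)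
      (LUmap x q i) θ := by
  apply HasFDerivAt.fun_sum
  intro j _
  exact HasFDerivAt.mul_const (𝕜 := ℝ)
    ((ContinuousLinearMap.proj (R := ℝ) (φ := fun _ : Fin p ⊕ Fin q => ℝ)
      (Sum.inl j)).hasFDerivAt) (x i j)

lemma hasFDerivAt_LV (z : Fin n → Fin q → ℝ) (i : Fin n) (θ : (Fin p ⊕ Fin q) → ℝ) :
    HasFDerivAt (fun θ : (Fin p ⊕ Fin q) → ℝ => ∑ k, θ (Sum.inr k) * z i k)
      (LVmap z p i) θ := by
  apply HasFDerivAt.fun_sum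
  intro k _
  exact HasFDerivAt.mul_const (𝕜 := ℝ)
    ((ContinuousLinearMap.proj (R := ℝ) (φ := fun _ : Fin p ⊕ Fin q => ℝ)
      (Sum.inr k)).hasFDerivAt) (z i k)

lemma LUmap_single (x : Fin n → Fin p → ℝ) (i : Fin n) (s : Fin p ⊕ Fin q) :
    LUmap x q i (Pi.single s 1) = Sum.elim (x i) (fun _ => 0) s := by
  cases s <;> simp [LUmap, ContinuousLinearMap.sum_apply, Pi.single_apply]

lemma LVmap_single (z : Fin n → Fin q → ℝ) (i : Fin n) (s : Fin p ⊕ Fin q) :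
    LVmap z p i (Pi.single s 1) = Sum.elim (fun _ => 0) (z i) s := by
  cases s <;> simp [LVmap, ContinuousLinearMap.sum_apply, Pi.single_apply]

lemma contDiff_U (x : Fin n → Fin p → ℝ) (i : Fin n) :
    ContDiff ℝ 2 (fun θ : (Fin p ⊕ Fin q) → ℝ => ∑ j, θ (Sum.inl j) * x i j) :=
  ContDiff.sum fun j _ =>
    ((ContinuousLinearMap.proj (R := ℝ) (φ := fun _ : Fin p ⊕ Fin q => ℝ)
      (Sum.inl j)).contDiff).mul contDiff_const

lemma contDiff_V (z : Fin n → Fin q → ℝ) (i : Fin n) :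
    ContDiff ℝ 2 (fun θ : (Fin p ⊕ Fin q) → ℝ => ∑ k, θ (Sum.inr k) * z i k) :=
  ContDiff.sum fun k _ =>
    ((ContinuousLinearMap.proj (R := ℝ) (φ := fun _ : Fin p ⊕ Fin q => ℝ)
      (Sum.inr k)).contDiff).mul contDiff_const

end ZIBLinear

/-- The sample ZIB log-likelihood `l_n(β,γ) = Σᵢ ℓ(β⋅xᵢ, γ⋅zᵢ; yᵢ)` is twice continuously
differentiable in `θ = (β,γ)`, its Hessian is the block matrix with β–β block
`Σᵢ aᵢ(θ)·xᵢxᵢᵀ`, γ–γ block `Σᵢ bᵢ(θ)·zᵢzᵢᵀ` and β–γ block `Σᵢ cᵢ(θ)·xᵢzᵢᵀ`, and it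
factorizes as `−W·D(θ)·Wᵀ`. -/
theorem zib_loglik_hessian (n p q : ℕ) (hn : 0 < n) (hp : 0 < p) (hq : 0 < q)
    (y : Fin n → ℝ) (hy : ∀ i, y i = 0 ∨ y i = 1)
    (x : Fin n → Fin p → ℝ) (z : Fin n → Fin q → ℝ)
    (J : Fin n → ℝ) (hJ : ∀ i, J i = if y i = 0 then 1 else 0)
    (L : ((Fin p ⊕ Fin q) → ℝ) → ℝ)
    (hL : ∀ θ, L θ =
      ∑ i, zibLL (∑ j, θ (Sum.inl j) * x i j) (∑ k, θ (Sum.inr k) * z i k) (y i))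
    (a b c : ((Fin p ⊕ Fin q) → ℝ) → Fin n → ℝ)
    (ha : ∀ θ i, a θ i =
      -(J i) * Real.exp (∑ j, θ (Sum.inl j) * x i j)
          * (Real.exp (∑ k, θ (Sum.inr k) * z i k)
                * (1 + Real.exp (∑ j, θ (Sum.inl j) * x i j))
                * (1 - Real.exp (∑ j, θ (Sum.inl j) * x i j)) + 1)
          / ((1 + Real.exp (∑ j, θ (Sum.inl j) * x i j)) ^ 2
              * (Real.exp (∑ k, θ (Sum.inr k) * z i k)
                  * (1 + Real.exp (∑ j, θ (Sum.inl j) * x i j)) + 1) ^ 2)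
        - (1 - J i) * Real.exp (∑ j, θ (Sum.inl j) * x i j)
          / (1 + Real.exp (∑ j, θ (Sum.inl j) * x i j)) ^ 2)
    (hb : ∀ θ i, b θ i =
      J i * Real.exp (∑ k, θ (Sum.inr k) * z i k)
          * (1 + Real.exp (∑ j, θ (Sum.inl j) * x i j))
          / (Real.exp (∑ k, θ (Sum.inr k) * z i k)
              * (1 + Real.exp (∑ j, θ (Sum.inl j) * x i j)) + 1) ^ 2
        - Real.exp (∑ k, θ (Sum.inr k) * z i k)
          / (1 + Real.exp (∑ k, θ (Sum.inr k) * z i k)) ^ 2)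
    (hc : ∀ θ i, c θ i =
      J i * Real.exp ((∑ j, θ (Sum.inl j) * x i j) + (∑ k, θ (Sum.inr k) * z i k))
        / (Real.exp (∑ k, θ (Sum.inr k) * z i k)
            * (1 + Real.exp (∑ j, θ (Sum.inl j) * x i j)) + 1) ^ 2)
    (W : Matrix (Fin p ⊕ Fin q) (Fin n ⊕ Fin n) ℝ)
    (hW : W = Matrix.fromBlocks (Matrix.of fun j i => x i j) 0 0 (Matrix.of fun k i => z i k))
    (D : ((Fin p ⊕ Fin q) → ℝ) → Matrix (Fin n ⊕ Fin n) (Fin n ⊕ Fin n) ℝ)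
    (hD : ∀ θ, D θ = Matrix.fromBlocks
      (Matrix.diagonal fun i => -(a θ i)) (Matrix.diagonal fun i => -(c θ i))
      (Matrix.diagonal fun i => -(c θ i)) (Matrix.diagonal fun i => -(b θ i))) :
    ContDiff ℝ 2 L ∧
    (∀ θ r s,
      fderiv ℝ (fun θ' => fderiv ℝ L θ' (Pi.single s 1)) θ (Pi.single r 1)
        = Matrix.fromBlocks
            (∑ i, a θ i • Matrix.vecMulVec (x i) (x i))
            (∑ i, c θ i • Matrix.vecMulVec (x i) (z i))
            (∑ i, c θ i • Matrix.vecMulVec (z i) (x i))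
            (∑ i, b θ i • Matrix.vecMulVec (z i) (z i)) r s) ∧
    (∀ θ r s,
      fderiv ℝ (fun θ' => fderiv ℝ L θ' (Pi.single s 1)) θ (Pi.single r 1)
        = (-(W * D θ * W.transpose)) r s) := by
  have hL2 : L = fun θ => ∑ i,
      phiF (J i) (y i) (∑ j, θ (Sum.inl j) * x i j) (∑ k, θ (Sum.inr k) * z i k) := by
    funext θ
    rw [hL]
    exact Finset.sum_congr rfl fun i _ => by rw [zibLL_eq_phiF, hJ]
  have hD1 : ∀ θ : (Fin p ⊕ Fin q) → ℝ, HasFDerivAt L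
      (∑ i, (AF (J i) (y i) (∑ j, θ (Sum.inl j) * x i j)
          (∑ k, θ (Sum.inr k) * z i k) • LUmap x q i
        + BF (J i) (∑ j, θ (Sum.inl j) * x i j)
          (∑ k, θ (Sum.inr k) * z i k) • LVmap z p i)) θ := by
    intro θ
    rw [hL2]
    apply HasFDerivAt.fun_sum
    intro i _
    exact zib_hasFDerivAt_phi (hasFDerivAt_LU x i θ) (hasFDerivAt_LV z i θ) (J i) (y i)
  have hfd1 : ∀ (θ : (Fin p ⊕ Fin q) → ℝ) (s : Fin p ⊕ Fin q),
      fderiv ℝ L θ (Pi.single s 1)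
      = ∑ i, (AF (J i) (y i) (∑ j, θ (Sum.inl j) * x i j)
            (∑ k, θ (Sum.inr k) * z i k) * Sum.elim (x i) (fun _ => 0) s
        + BF (J i) (∑ j, θ (Sum.inl j) * x i j)
            (∑ k, θ (Sum.inr k) * z i k) * Sum.elim (fun _ => 0) (z i) s) := by
    intro θ s
    rw [(hD1 θ).fderiv]
    simp only [ContinuousLinearMap.sum_apply, ContinuousLinearMap.add_apply,
      ContinuousLinearMap.smul_apply, LUmap_single, LVmap_single, smul_eq_mul]
  have part2 : ∀ θ r s,
      fderiv ℝ (fun θ' => fderiv ℝ L θ' (Pi.single s 1)) θ (Pi.single r 1)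
        = Matrix.fromBlocks
            (∑ i, a θ i • Matrix.vecMulVec (x i) (x i))
            (∑ i, c θ i • Matrix.vecMulVec (x i) (z i))
            (∑ i, c θ i • Matrix.vecMulVec (z i) (x i))
            (∑ i, b θ i • Matrix.vecMulVec (z i) (z i)) r s := by
    intro θ r s
    have hfun : (fun θ' => fderiv ℝ L θ' (Pi.single s 1))
        = fun θ' => ∑ i, (AF (J i) (y i) (∑ j, θ' (Sum.inl j) * x i j)
            (∑ k, θ' (Sum.inr k) * z i k) * Sum.elim (x i) (fun _ => 0) s
          + BF (J i) (∑ j, θ' (Sum.inl j) * x i j)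
            (∑ k, θ' (Sum.inr k) * z i k) * Sum.elim (fun _ => 0) (z i) s) :=
      funext fun θ' => hfd1 θ' s
    have hG : HasFDerivAt (fun θ' => ∑ i, (AF (J i) (y i) (∑ j, θ' (Sum.inl j) * x i j)
            (∑ k, θ' (Sum.inr k) * z i k) * Sum.elim (x i) (fun _ => 0) s
          + BF (J i) (∑ j, θ' (Sum.inl j) * x i j)
            (∑ k, θ' (Sum.inr k) * z i k) * Sum.elim (fun _ => 0) (z i) s))
        (∑ i, (Sum.elim (x i) (fun _ => 0) s •
              (aF (J i) (∑ j, θ (Sum.inl j) * x i j) (∑ k, θ (Sum.inr k) * z i k) • LUmap x q i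
                + cF (J i) (∑ j, θ (Sum.inl j) * x i j) (∑ k, θ (Sum.inr k) * z i k)
                    • LVmap z p i)
            + Sum.elim (fun _ => 0) (z i) s •
              (cF (J i) (∑ j, θ (Sum.inl j) * x i j) (∑ k, θ (Sum.inr k) * z i k) • LUmap x q i
                + bF (J i) (∑ j, θ (Sum.inl j) * x i j) (∑ k, θ (Sum.inr k) * z i k)
                    • LVmap z p i))) θ := by
      apply HasFDerivAt.fun_sum
      intro i _
      exact (HasFDerivAt.mul_const (𝕜 := ℝ)
          (zib_hasFDerivAt_A (hasFDerivAt_LU x i θ) (hasFDerivAt_LV z i θ) (J i) (y i))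
          (Sum.elim (x i) (fun _ => 0) s)).add
        (HasFDerivAt.mul_const (𝕜 := ℝ)
          (zib_hasFDerivAt_B (hasFDerivAt_LU x i θ) (hasFDerivAt_LV z i θ) (J i))
          (Sum.elim (fun _ => 0) (z i) s))
    rw [hfun, hG.fderiv]
    simp only [ContinuousLinearMap.sum_apply, ContinuousLinearMap.add_apply,
      ContinuousLinearMap.smul_apply, LUmap_single, LVmap_single, smul_eq_mul]
    cases r <;> cases s <;>
      · simp only [Matrix.fromBlocks_apply₁₁, Matrix.fromBlocks_apply₁₂,
          Matrix.fromBlocks_apply₂₁, Matrix.fromBlocks_apply₂₂, Matrix.sum_apply,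
          Matrix.smul_apply, Matrix.vecMulVec_apply, Sum.elim_inl, Sum.elim_inr,
          smul_eq_mul]
        refine Finset.sum_congr rfl fun i _ => ?_
        simp only [ha θ i, hb θ i, hc θ i, aF, bF, cF]
        ring
  refine ⟨?_, part2, fun θ r s => (part2 θ r s).trans ?_⟩
  · rw [hL2]
    exact ContDiff.sum fun i _ =>
      zib_contDiff_phi (contDiff_U x i) (contDiff_V z i) (J i) (y i)
  · rw [hW, hD θ, Matrix.fromBlocks_transpose, Matrix.fromBlocks_multiply,
      Matrix.fromBlocks_multiply]
    cases r <;> cases s <;>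
      · simp [Matrix.mul_apply, Matrix.mul_diagonal, Matrix.diagonal_mul, Matrix.sum_apply,
          Matrix.vecMulVec_apply, Matrix.neg_apply, Matrix.diagonal_apply, mul_ite, mul_zero,
          ite_mul, zero_mul, Finset.sum_ite_eq, Finset.sum_ite_eq']
        exact Finset.sum_congr rfl fun i _ => by ring
end
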